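/- The class P is closed under finite products: if X and Y belong to P, then X × Y belongs to P. -/

import Mathlib

/-!
Everything in the definition of `𝐏` is compatible with products, because the homotopy groups
and the homotopy fibres of a product are the products of those of the factors: products of
universal covers, homotopy retracts, weak equivalences, GEMs (with their connectivity, locality
and finiteness) and homotopy fibrations are again of the same kind. Two generalised Postnikov
towers of lengths `l₁` and `l₂` are first padded to the common length `max l₁ l₂` by identity
stages (an identity is the fibre inclusion of the map to a point, a trivial GEM); their
levelwise product is then a tower for the product of the universal covers.
-/

open scoped Topology
open ContinuousMap

noncomputable section

/-- The map on generalized loops induced by a continuous map. -/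
def GenLoop.push {X Y : Type} [TopologicalSpace X] [TopologicalSpace Y] {N : Type} (f : C(X, Y))
    {x : X} (p : GenLoop N X x) : GenLoop N Y (f x) :=
  ⟨f.comp p.1, fun t ht => by simp [p.2 t ht]⟩

/-- The map induced by a continuous map on homotopy groups (as pointed sets). -/
def piMap {X Y : Type} [TopologicalSpace X] [TopologicalSpace Y] (f : C(X, Y)) (N : Type) (x : X) :
    HomotopyGroup N X x → HomotopyGroup N Y (f x) :=
  Quotient.map (GenLoop.push f) (fun _ _ h => Nonempty.map (fun H => H.compContinuousMap f) h)

/-- A weakly contractible space: all homotopy groups (including `π₀`) are trivial. -/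
def WeaklyContractible (X : Type) [TopologicalSpace X] : Prop :=
  Nonempty X ∧ ∀ (x : X) (n : ℕ), Subsingleton (HomotopyGroup (Fin n) X x)

/-- A weak homotopy equivalence: induces bijections on all homotopy groups at all basepoints
(including `π₀`). -/
def IsWeakHomotopyEquiv {X Y : Type} [TopologicalSpace X] [TopologicalSpace Y]
    (f : C(X, Y)) : Prop :=
  (Nonempty Y → Nonempty X) ∧ ∀ (x : X) (n : ℕ), Function.Bijective (piMap f (Fin n) x)

/-- `X` is a homotopy retract of `Y`. -/
def HomotopyRetract (X Y : Type) [TopologicalSpace X] [TopologicalSpace Y] : Prop :=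
  ∃ (i : C(X, Y)) (r : C(Y, X)), (r.comp i).Homotopic (ContinuousMap.id X)

/-- The underlying map of a homotopy equivalence. -/
def IsHEquivMap {X Y : Type} [TopologicalSpace X] [TopologicalSpace Y] (f : C(X, Y)) : Prop :=
  ∃ g : C(Y, X), (g.comp f).Homotopic (ContinuousMap.id X) ∧
    (f.comp g).Homotopic (ContinuousMap.id Y)

/-- The homotopy fibre of `f` over `b`. -/
def HFiber {E B : Type} [TopologicalSpace E] [TopologicalSpace B] (f : C(E, B)) (b : B) : Type :=
  { z : E × C(unitInterval, B) // z.2 0 = f z.1 ∧ z.2 1 = b }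

instance {E B : Type} [TopologicalSpace E] [TopologicalSpace B] (f : C(E, B)) (b : B) :
    TopologicalSpace (HFiber f b) :=
  instTopologicalSpaceSubtype

/-- The projection from the homotopy fibre to the total space. -/
def HFiber.proj {E B : Type} [TopologicalSpace E] [TopologicalSpace B] (f : C(E, B)) (b : B) :
    C(HFiber f b, E) :=
  ⟨fun z => z.1.1, by fun_prop⟩

/-- Comparison map from `F` to the homotopy fibre of `p`, given a null-homotopy of `p ∘ i`. -/
def hfibCompare {F E B : Type} [TopologicalSpace F] [TopologicalSpace E] [TopologicalSpace B]
    (i : C(F, E)) (p : C(E, B)) (b : B)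
    (H : ContinuousMap.Homotopy (p.comp i) (ContinuousMap.const F b)) : C(F, HFiber p b) where
  toFun z := ⟨(i z, (H.toContinuousMap.comp ContinuousMap.prodSwap).curry z),
    by simp, by simp⟩
  continuous_toFun := by
    apply Continuous.subtype_mk
    exact i.continuous.prodMk ((H.toContinuousMap.comp ContinuousMap.prodSwap).curry).continuous

/-- A sequence `F → E → B` is a homotopy fibration if `p ∘ i` is null-homotopic via a homotopy
for which the induced comparison map from `F` to the homotopy fibre of `p` is a homotopy
equivalence. -/
def IsHomotopyFibration {F E B : Type} [TopologicalSpace F] [TopologicalSpace E]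
    [TopologicalSpace B] (i : C(F, E)) (p : C(E, B)) : Prop :=
  ∃ (b : B) (H : ContinuousMap.Homotopy (p.comp i) (ContinuousMap.const F b)),
    IsHEquivMap (hfibCompare i p b H)


open CategoryTheory


/-- The singular chain complex functor with coefficients in a commutative ring `R`. -/
def singularChains (R : Type) [CommRing R] : TopCat.{0} ⥤ ChainComplex (ModuleCat.{0} R) ℕ :=
  TopCat.toSSet ⋙ ((SimplicialObject.whiskering _ _).obj (ModuleCat.free R)) ⋙
    AlgebraicTopology.alternatingFaceMapComplex _

/-- Singular homology of a space with coefficients in `R`. -/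
def SH (R : Type) [CommRing R] (n : ℕ) (X : Type) [TopologicalSpace X] : ModuleCat R :=
  ((singularChains R).obj (TopCat.of X)).homology n

/-- The induced map on singular homology. -/
def SHmap (R : Type) [CommRing R] (n : ℕ) {X Y : Type} [TopologicalSpace X] [TopologicalSpace Y]
    (f : C(X, Y)) : SH R n X ⟶ SH R n Y :=
  HomologicalComplex.homologyMap ((singularChains R).map (TopCat.ofHom f)) n

/-- An abelian group is a finitely generated `R`-module (for some compatible `R`-module
structure). -/
def IsFGModuleOver (R : Type) [CommRing R] (M : Type) [AddCommGroup M] : Prop :=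
  ∃ (N : Type) (_ : AddCommGroup N) (_ : Module R N),
    Module.Finite R N ∧ Nonempty (M ≃+ N)

/-- A (multiplicative) group is, up to isomorphism, a finitely generated `R`-module. -/
def IsFGMulOver (R : Type) [CommRing R] (G : Type) [Group G] : Prop :=
  ∃ (N : Type) (_ : AddCommGroup N) (_ : Module R N),
    Module.Finite R N ∧ Nonempty (G ≃* Multiplicative N)

/-- A space has finite type over `R`: each reduced integral homology group is a finitely
generated `R`-module.  (For connected spaces and `R = ℤ` this is the usual notion of
finite type.) -/
def FiniteTypeOver (R : Type) [CommRing R] (X : Type) [TopologicalSpace X] : Prop :=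
  ∀ n : ℕ, 1 ≤ n → IsFGModuleOver R (SH ℤ n X)

/-- The ideal `(p) ⊆ ℤ`. -/
def pIdeal (p : ℕ) : Ideal ℤ := Ideal.span {(p : ℤ)}

instance pIdeal.isPrime (p : ℕ) [hp : Fact p.Prime] : (pIdeal p).IsPrime := by
  rw [pIdeal, Ideal.span_singleton_prime (by exact_mod_cast hp.out.ne_zero)]
  exact_mod_cast Nat.prime_iff_prime_int.mp hp.out

/-- The integers localized at the prime `p`. -/
abbrev Zloc (p : ℕ) [Fact p.Prime] : Type := Localization.AtPrime (pIdeal p)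

/-- A nonempty path-connected space all of whose homology with coefficients in `R` vanishes
in positive degrees, i.e. whose reduced `R`-homology vanishes. -/
def AcyclicOver (R : Type) [CommRing R] (X : Type) [TopologicalSpace X] : Prop :=
  Nonempty X ∧ PathConnectedSpace X ∧ ∀ n : ℕ, 1 ≤ n → Subsingleton (SH R n X)

/-- An acyclic space: reduced integral homology vanishes. -/
def AcyclicSpace (X : Type) [TopologicalSpace X] : Prop := AcyclicOver ℤ X

/-- A homology rational sphere: a connected space with `H̃⋆(X;ℤ) ≅ ℚ`, concentrated in a
single (positive) degree. -/
def IsHomologyRationalSphere (X : Type) [TopologicalSpace X] : Prop :=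
  Nonempty X ∧ PathConnectedSpace X ∧ ∃ d : ℕ, 1 ≤ d ∧ Nonempty ((SH ℤ d X) ≃+ ℚ) ∧
    ∀ n : ℕ, 1 ≤ n → n ≠ d → Subsingleton (SH ℤ n X)



/-! ### Local spaces, GEMs and generalised Postnikov towers -/

/-- `S`-local space: the `k`-th power map on all homotopy groups is bijective
for every `k` with `S k`. -/
def SLocalSpace (S : ℕ → Prop) (X : Type) [TopologicalSpace X] : Prop :=
  ∀ (x : X) (n k : ℕ), S k →
    Function.Bijective (fun g : HomotopyGroup (Fin (n + 1)) X x => g ^ k)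

/-- The family of exponents inverted in `p`-local spaces. -/
def pInv (p : ℕ) : ℕ → Prop := fun k => k ≠ 0 ∧ ¬ (p ∣ k)

/-- The family of exponents inverted in rational spaces. -/
def ratInv : ℕ → Prop := fun k => k ≠ 0

/-- No exponents inverted (integral setting). -/
def intInv : ℕ → Prop := fun _ => False

/-- Homotopy groups are finitely generated `R`-modules in every degree. -/
def PiFiniteOver (R : Type) [CommRing R] (X : Type) [TopologicalSpace X] : Prop :=
  ∀ (x : X) (n : ℕ), IsFGMulOver R (HomotopyGroup (Fin (n + 1)) X x)

/-- An Eilenberg-MacLane space `K(A, n+1)` for some abelian group `A`. -/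
def IsEMSpace (Y : Type) [TopologicalSpace Y] (n : ℕ) : Prop :=
  Nonempty Y ∧ PathConnectedSpace Y ∧
    (∀ (y : Y) (k : ℕ), k ≠ n + 1 → Subsingleton (HomotopyGroup (Fin k) Y y)) ∧
    (∀ (y : Y) (a b : HomotopyGroup (Fin (n + 1)) Y y), a * b = b * a)

/-- A generalised Eilenberg-MacLane space (GEM): a space homotopy equivalent to a (possibly
infinite) product of Eilenberg-MacLane spaces of abelian groups. -/
def IsGEM (Z : Type) [TopologicalSpace Z] : Prop :=
  ∃ (ι : Type) (Y : ι → Type) (_ : ∀ i, TopologicalSpace (Y i)) (n : ι → ℕ),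
    (∀ i, IsEMSpace (Y i) (n i)) ∧ Nonempty (ContinuousMap.HomotopyEquiv Z (∀ i, Y i))

/-- One step of a generalised Postnikov tower: `q : Z' → Z` is, up to homotopy, the fibre
inclusion of a homotopy fibration `Z' → Z → K` with `K` a `c`-connected GEM which is `S`-local,
and of finite type over `R` when `ft = true`. -/
def GPTStep (R : Type) [CommRing R] (S : ℕ → Prop) (ft : Bool) (c : ℕ)
    {Z' Z : Type} [TopologicalSpace Z'] [TopologicalSpace Z] (q : C(Z', Z)) : Prop :=
  ∃ (K : Type) (_ : TopologicalSpace K) (k : C(Z, K)),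
    IsGEM K ∧ (∀ (y : K) (j : ℕ), j ≤ c → Subsingleton (HomotopyGroup (Fin j) K y)) ∧
    SLocalSpace S K ∧ (ft = true → PiFiniteOver R K) ∧ IsHomotopyFibration q k

/-- `X` admits a generalised Postnikov tower of length `l` whose principal fibrations have as
fibres `c`-connected GEMs which are `S`-local, and of finite type over `R` when `ft = true`.
(`c = 1` gives the usual simply-connected GEM condition.) -/
def HasGPT (R : Type) [CommRing R] (S : ℕ → Prop) (ft : Bool) (c : ℕ)
    (X : Type) [TopologicalSpace X] (l : ℕ) : Prop :=
  ∃ (Z : ℕ → Type) (_ : ∀ n, TopologicalSpace (Z n)) (q : ∀ n, C(Z (n + 1), Z n)),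
    WeaklyContractible (Z 0) ∧ (∀ n < l, GPTStep R S ft c (q n)) ∧
    ∃ f : C(X, Z l), IsWeakHomotopyEquiv f

/-- A universal cover: a covering map with simply connected total space. -/
def IsUniversalCover {X' X : Type} [TopologicalSpace X'] [TopologicalSpace X]
    (q : C(X', X)) : Prop :=
  IsCoveringMap (q : X' → X) ∧ SimplyConnectedSpace X'

/-! ### The classes `P`, `F`, `K` and their local analogues -/

/-- The class `P` (in its `(R, S, loc)`-parametrised form): the minimal class, closed under
homotopy retracts, of connected spaces (`S`-local and of finite type over `R` when
`loc = true`) whose universal covers admit finite type (over `R`) `S`-local generalised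
Postnikov towers of finite length. -/
def ClassPGen (R : Type) [CommRing R] (S : ℕ → Prop) (loc : Bool)
    (X : Type) [TopologicalSpace X] : Prop :=
  ConnectedSpace X ∧ (loc = true → SLocalSpace S X ∧ FiniteTypeOver R X) ∧
  ∃ (Y : Type) (_ : TopologicalSpace Y), ConnectedSpace Y ∧
    (loc = true → SLocalSpace S Y ∧ FiniteTypeOver R Y) ∧
    (∃ (Y' : Type) (_ : TopologicalSpace Y') (c : C(Y', Y)), IsUniversalCover c ∧
      ∃ l : ℕ, HasGPT R S true 1 Y' l) ∧
    HomotopyRetract X Y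

/-- The class `𝐏` of the paper. -/
def ClassP (X : Type) [TopologicalSpace X] : Prop := ClassPGen ℤ intInv false X

/-- The class `𝐏ₚ` of the paper. -/
def ClassPp (p : ℕ) [Fact p.Prime] (X : Type) [TopologicalSpace X] : Prop :=
  ClassPGen (Zloc p) (pInv p) true X

/-- The class `𝐏₀` of the paper. -/
def ClassP0 (X : Type) [TopologicalSpace X] : Prop := ClassPGen ℚ ratInv true X

/-- The class `F` (parametrised): connected spaces whose universal covers are of finite type
(over `R`) and have non-trivial homotopy groups in only finitely many dimensions. -/
def ClassFGen (R : Type) [CommRing R] (S : ℕ → Prop) (loc : Bool)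
    (X : Type) [TopologicalSpace X] : Prop :=
  ConnectedSpace X ∧ (loc = true → SLocalSpace S X ∧ FiniteTypeOver R X) ∧
  ∃ (X' : Type) (_ : TopologicalSpace X') (c : C(X', X)), IsUniversalCover c ∧
    FiniteTypeOver R X' ∧ (loc = true → SLocalSpace S X') ∧
    ∃ N : ℕ, ∀ n ≥ N, ∀ x' : X', Subsingleton (HomotopyGroup (Fin (n + 1)) X' x')

/-- The class `𝐅` of the paper. -/
def ClassF (X : Type) [TopologicalSpace X] : Prop := ClassFGen ℤ intInv false X

/-- The class `𝐅ₚ` of the paper. -/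
def ClassFp (p : ℕ) [Fact p.Prime] (X : Type) [TopologicalSpace X] : Prop :=
  ClassFGen (Zloc p) (pInv p) true X

/-- The class `𝐅₀` of the paper. -/
def ClassF0 (X : Type) [TopologicalSpace X] : Prop := ClassFGen ℚ ratInv true X

/-- `X` admits a classical Postnikov tower (consisting of stages `P n`, comparison maps
`f n : X → P n`, structure maps `q n : P (n+1) → P n` and `k`-invariants
`k n : P n → L n` with `L n` an Eilenberg-MacLane space of dimension `n + 2`) in which all but
finitely many of the `k`-invariants are trivial (null-homotopic). -/
def HasFinitelyManyKInvariants (X : Type) [TopologicalSpace X] : Prop :=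
  ∃ (P : ℕ → Type) (_ : ∀ n, TopologicalSpace (P n))
    (f : ∀ n, C(X, P n)) (q : ∀ n, C(P (n + 1), P n))
    (L : ℕ → Type) (_ : ∀ n, TopologicalSpace (L n)) (k : ∀ n, C(P n, L n)),
    WeaklyContractible (P 0) ∧
    (∀ n, (f n).Homotopic ((q n).comp (f (n + 1)))) ∧
    (∀ (n : ℕ) (x : X) (j : ℕ), j ≤ n → Function.Bijective (piMap (f n) (Fin j) x)) ∧
    (∀ (n : ℕ) (y : P n) (j : ℕ), j > n → Subsingleton (HomotopyGroup (Fin j) (P n) y)) ∧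
    (∀ n, IsEMSpace (L n) (n + 1)) ∧
    (∀ n, IsHomotopyFibration (q n) (k n)) ∧
    Set.Finite {n : ℕ | ¬ ∃ y : L n, (k n).Homotopic (ContinuousMap.const (P n) y)}

/-- The class `K` (parametrised): connected spaces whose universal covers are of finite type
(over `R`) and have only finitely many non-trivial `k`-invariants. -/
def ClassKGen (R : Type) [CommRing R] (S : ℕ → Prop) (loc : Bool)
    (X : Type) [TopologicalSpace X] : Prop :=
  ConnectedSpace X ∧ (loc = true → SLocalSpace S X ∧ FiniteTypeOver R X) ∧
  ∃ (X' : Type) (_ : TopologicalSpace X') (c : C(X', X)), IsUniversalCover c ∧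
    FiniteTypeOver R X' ∧ (loc = true → SLocalSpace S X') ∧
    HasFinitelyManyKInvariants X'

/-- The class `𝐊` of the paper. -/
def ClassK (X : Type) [TopologicalSpace X] : Prop := ClassKGen ℤ intInv false X

/-- The class `𝐊ₚ` of the paper. -/
def ClassKp (p : ℕ) [Fact p.Prime] (X : Type) [TopologicalSpace X] : Prop :=
  ClassKGen (Zloc p) (pInv p) true X

/-- The class `𝐊₀` of the paper. -/
def ClassK0 (X : Type) [TopologicalSpace X] : Prop := ClassKGen ℚ ratInv true X

/-- The class `𝐄₀` of the paper: connected spaces whose universal cover is rational elliptic,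
i.e. a rational space with finite dimensional rational homotopy and rational homology. -/
def ClassE0 (X : Type) [TopologicalSpace X] : Prop :=
  ConnectedSpace X ∧
  ∃ (X' : Type) (_ : TopologicalSpace X') (c : C(X', X)), IsUniversalCover c ∧
    SLocalSpace ratInv X' ∧
    (∀ (x' : X') (n : ℕ), IsFGMulOver ℚ (HomotopyGroup (Fin (n + 1)) X' x')) ∧
    (∃ N : ℕ, ∀ n ≥ N, ∀ x' : X', Subsingleton (HomotopyGroup (Fin (n + 1)) X' x')) ∧
    (∀ n : ℕ, 1 ≤ n → IsFGModuleOver ℚ (SH ℚ n X')) ∧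
    (∃ N : ℕ, ∀ n ≥ N, Subsingleton (SH ℚ n X'))

/-! ### Asphericity and connectivity -/

/-- An aspherical (`K(π,1)`) space. -/
def IsAspherical (X : Type) [TopologicalSpace X] : Prop :=
  Nonempty X ∧ PathConnectedSpace X ∧
    ∀ (x : X) (n : ℕ), 2 ≤ n → Subsingleton (HomotopyGroup (Fin n) X x)

/-- `X` is a `K(G, 1)`. -/
def IsKpi1Of (X : Type) [TopologicalSpace X] (G : Type) [Group G] : Prop :=
  IsAspherical X ∧ ∃ x : X, Nonempty (FundamentalGroup X x ≃* G)

/-- An `r`-connected space: homotopy groups vanish in degrees `≤ r`. -/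
def IsNConnected (r : ℕ) (X : Type) [TopologicalSpace X] : Prop :=
  Nonempty X ∧ ∀ (x : X) (k : ℕ), k ≤ r → Subsingleton (HomotopyGroup (Fin k) X x)


/-! ### Cones, suspensions, smash products and pushouts -/

/-- The (unreduced) cone on `X`: `X × I` with `X × {1}` collapsed to a point. -/
def TopCone (X : Type) [TopologicalSpace X] : Type :=
  Quot (fun a b : X × unitInterval => a.2 = 1 ∧ b.2 = 1)

instance (X : Type) [TopologicalSpace X] : TopologicalSpace (TopCone X) :=
  inferInstanceAs (TopologicalSpace (Quot _))

/-- The inclusion of `X` into the base of the cone. -/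
def coneIncl (X : Type) [TopologicalSpace X] : C(X, TopCone X) :=
  ⟨fun x => Quot.mk _ (x, 0), continuous_quot_mk.comp (by fun_prop)⟩

/-- The map of cones induced by a continuous map. -/
def coneMap {X Y : Type} [TopologicalSpace X] [TopologicalSpace Y] (f : C(X, Y)) :
    C(TopCone X, TopCone Y) :=
  ⟨Quot.lift (fun a => Quot.mk _ (f a.1, a.2))
      (fun _ _ h => Quot.sound ⟨h.1, h.2⟩),
    continuous_quot_lift _ (continuous_quot_mk.comp (by fun_prop))⟩

theorem coneMap_mapsTo {X Y : Type} [TopologicalSpace X] [TopologicalSpace Y] (f : C(X, Y)) :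
    Set.MapsTo (coneMap f) (Set.range (coneIncl X)) (Set.range (coneIncl Y)) := by
  rintro _ ⟨x, rfl⟩; exact ⟨f x, rfl⟩

/-- The reduced suspension of a pointed space: `X × I` with `X × {0} ∪ X × {1} ∪ {x₀} × I`
collapsed to a point. -/
def RSusp (X : Type) [TopologicalSpace X] (x0 : X) : Type :=
  Quot (fun a b : X × unitInterval =>
    (a.2 = 0 ∨ a.2 = 1 ∨ a.1 = x0) ∧ (b.2 = 0 ∨ b.2 = 1 ∨ b.1 = x0))

instance (X : Type) [TopologicalSpace X] (x0 : X) : TopologicalSpace (RSusp X x0) :=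
  inferInstanceAs (TopologicalSpace (Quot _))

/-- The basepoint of the reduced suspension. -/
def RSusp.pt (X : Type) [TopologicalSpace X] (x0 : X) : RSusp X x0 :=
  Quot.mk _ (x0, 0)

/-- The map of reduced suspensions induced by a pointed continuous map. -/
def rsuspMap {X Y : Type} [TopologicalSpace X] [TopologicalSpace Y] {x0 : X} {y0 : Y}
    (f : C(X, Y)) (hf : f x0 = y0) : C(RSusp X x0, RSusp Y y0) :=
  ⟨Quot.lift (fun a => Quot.mk _ (f a.1, a.2))
      (by
        rintro a b ⟨ha, hb⟩
        refine Quot.sound ⟨?_, ?_⟩ <;>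
          [rcases ha with h | h | h; rcases hb with h | h | h] <;>
          simp [h, hf]),
    continuous_quot_lift _ (continuous_quot_mk.comp (by fun_prop))⟩

/-- The half-smash `B ⋊ X = (B × X)/(B × {x₀})`. -/
def HalfSmash (B X : Type) [TopologicalSpace B] [TopologicalSpace X] (x0 : X) : Type :=
  Quot (fun u v : B × X => u.2 = x0 ∧ v.2 = x0)

instance (B X : Type) [TopologicalSpace B] [TopologicalSpace X] (x0 : X) :
    TopologicalSpace (HalfSmash B X x0) :=
  inferInstanceAs (TopologicalSpace (Quot _))

/-- The smash product `A ∧ X = (A × X)/(A × {x₀} ∪ {a₀} × X)`. -/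
def Smash (A X : Type) [TopologicalSpace A] [TopologicalSpace X] (a0 : A) (x0 : X) : Type :=
  Quot (fun u v : A × X => (u.1 = a0 ∨ u.2 = x0) ∧ (v.1 = a0 ∨ v.2 = x0))

instance (A X : Type) [TopologicalSpace A] [TopologicalSpace X] (a0 : A) (x0 : X) :
    TopologicalSpace (Smash A X a0 x0) :=
  inferInstanceAs (TopologicalSpace (Quot _))

/-- The basepoint of a smash product. -/
def Smash.pt {A X : Type} [TopologicalSpace A] [TopologicalSpace X] (a0 : A) (x0 : X) :
    Smash A X a0 x0 :=
  Quot.mk _ (a0, x0)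

/-- The wedge `U ∨ V`. -/
def Wedge (U V : Type) [TopologicalSpace U] [TopologicalSpace V] (u0 : U) (v0 : V) : Type :=
  Quot (fun s t : U ⊕ V => (s = Sum.inl u0 ∨ s = Sum.inr v0) ∧ (t = Sum.inl u0 ∨ t = Sum.inr v0))

instance (U V : Type) [TopologicalSpace U] [TopologicalSpace V] (u0 : U) (v0 : V) :
    TopologicalSpace (Wedge U V u0 v0) :=
  inferInstanceAs (TopologicalSpace (Quot _))

/-- The relation defining the pushout of `B ←f− A −g→ X`. -/
def PushoutRel {A B X : Type} (f : A → B) (g : A → X) (u v : B ⊕ X) : Prop :=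
  ∃ a : A, u = Sum.inl (f a) ∧ v = Sum.inr (g a)

/-- The (strict) topological pushout of `B ←f− A −g→ X`. -/
def TopPushout {A B X : Type} [TopologicalSpace A] [TopologicalSpace B] [TopologicalSpace X]
    (f : C(A, B)) (g : C(A, X)) : Type :=
  Quot (PushoutRel f g)

instance {A B X : Type} [TopologicalSpace A] [TopologicalSpace B] [TopologicalSpace X]
    (f : C(A, B)) (g : C(A, X)) : TopologicalSpace (TopPushout f g) :=
  inferInstanceAs (TopologicalSpace (Quot _))

/-! ### Simplicial complexes and polyhedral products -/

/-- An (abstract) simplicial complex on the vertex set `[m] = {0, …, m-1}`. -/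
structure SimplicialComplexOn (m : ℕ) where
  faces : Set (Finset (Fin m))
  empty_mem : ∅ ∈ faces
  down_closed : ∀ {σ τ : Finset (Fin m)}, σ ∈ faces → τ ⊆ σ → τ ∈ faces
  vertex_mem : ∀ i : Fin m, {i} ∈ faces

namespace SimplicialComplexOn

/-- `K` is the full simplex on its vertex set. -/
def IsSimplex {m : ℕ} (K : SimplicialComplexOn m) : Prop := K.faces = Set.univ

/-- A minimal non-face of `K`. -/
def IsMinNonFace {m : ℕ} (K : SimplicialComplexOn m) (M : Finset (Fin m)) : Prop :=
  2 ≤ M.card ∧ M ∉ K.faces ∧ ∀ τ : Finset (Fin m), τ ⊂ M → τ ∈ K.faces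

/-- A flag complex: all minimal non-faces have cardinality two. -/
def IsFlag {m : ℕ} (K : SimplicialComplexOn m) : Prop :=
  ∀ M : Finset (Fin m), K.IsMinNonFace M → M.card = 2

/-- The minimal non-faces are mutually disjoint. -/
def MinNonFacesDisjoint {m : ℕ} (K : SimplicialComplexOn m) : Prop :=
  ∀ M M' : Finset (Fin m), K.IsMinNonFace M → K.IsMinNonFace M' → M ≠ M' →
    Disjoint M M'

end SimplicialComplexOn

/-- The polyhedral product `Z_K(X, A)` of the family of pairs `(X i, A i)`, as a subset of
`∏ i, X i`. -/
def polyProd {m : ℕ} (K : SimplicialComplexOn m) (X : Fin m → Type)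
    [∀ i, TopologicalSpace (X i)] (A : ∀ i, Set (X i)) : Set (∀ i, X i) :=
  {z | ∃ σ ∈ K.faces, ∀ i, i ∉ σ → z i ∈ A i}

/-- The continuous inclusion of a subspace. -/
def inclCM {X : Type} [TopologicalSpace X] (A : Set X) : C(A, X) :=
  ⟨Subtype.val, continuous_subtype_val⟩

/-- The map of polyhedral products induced by a family of maps of pairs. -/
def polyProdMap {m : ℕ} (K : SimplicialComplexOn m) {X Y : Fin m → Type}
    [∀ i, TopologicalSpace (X i)] [∀ i, TopologicalSpace (Y i)]
    {A : ∀ i, Set (X i)} {B : ∀ i, Set (Y i)} (f : ∀ i, C(X i, Y i))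
    (hf : ∀ i, Set.MapsTo (f i) (A i) (B i)) :
    C(polyProd K X A, polyProd K Y B) :=
  have hmem : ∀ z : polyProd K X A, (fun i => f i (z.1 i)) ∈ polyProd K Y B := fun z => by
    obtain ⟨σ, hσ, hz⟩ := z.2
    exact ⟨σ, hσ, fun i hi => hf i (hz i hi)⟩
  ⟨fun z => ⟨fun i => f i (z.1 i), hmem z⟩,
    Continuous.subtype_mk (continuous_pi fun i =>
      (f i).continuous.comp ((continuous_apply i).comp continuous_subtype_val)) hmem⟩

/-- The inclusion of the polyhedral product into the ambient product. -/
def polyProdProj {m : ℕ} (K : SimplicialComplexOn m) (X : Fin m → Type)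
    [∀ i, TopologicalSpace (X i)] (A : ∀ i, Set (X i)) :
    C(polyProd K X A, ∀ i, X i) :=
  ⟨Subtype.val, continuous_subtype_val⟩

/-! ### Cofibrations -/

/-- A map is a cofibration when it has the homotopy extension property. -/
def IsCofibration {A X : Type} [TopologicalSpace A] [TopologicalSpace X] (j : C(A, X)) : Prop :=
  ∀ (Y : Type) (_ : TopologicalSpace Y) (g : C(X, Y)) (h : C(unitInterval × A, Y)),
    (∀ a, h (0, a) = g (j a)) →
    ∃ H : C(unitInterval × X, Y), (∀ x, H (0, x) = g x) ∧ ∀ t a, H (t, j a) = h (t, a)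

/-- `(X, A)` is an NDR-pair: the inclusion `A → X` is a cofibration. -/
def IsNDRPair {X : Type} [TopologicalSpace X] (A : Set X) : Prop :=
  IsCofibration (inclCM A)


/-! ### The evaluation map from the cone on a homotopy fibre -/

/-- The canonical evaluation map `C(hofib(A → X)) → X`, sending `((a, γ), t)` to `γ t`. -/
def coneFibEval {X : Type} [TopologicalSpace X] (A : Set X) (x0 : X) :
    C(TopCone (HFiber (inclCM A) x0), X) :=
  ⟨Quot.lift (fun w : HFiber (inclCM A) x0 × unitInterval => w.1.1.2 w.2)
      (fun w w' h => by
        show w.1.1.2 w.2 = w'.1.1.2 w'.2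
        rw [h.1, h.2, w.1.2.2, w'.1.2.2]),
    continuous_quot_lift _ (by
      have h1 : Continuous fun w : HFiber (inclCM A) x0 × unitInterval =>
          ((w.1.1.2, w.2) : C(unitInterval, X) × unitInterval) :=
        ((continuous_snd.comp (continuous_subtype_val.comp continuous_fst)).prodMk
          continuous_snd)
      exact ContinuousEval.continuous_eval.comp h1)⟩

theorem coneFibEval_mapsTo {X : Type} [TopologicalSpace X] (A : Set X) (x0 : X) :
    Set.MapsTo (coneFibEval A x0) (Set.range (coneIncl (HFiber (inclCM A) x0))) A := by
  rintro _ ⟨w, rfl⟩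
  show w.1.2 0 ∈ A
  rw [w.2.1]
  exact w.1.1.2

/-! ### Lusternik-Schnirelmann category and localizations -/

/-- `cat X ≤ n`: `X` is covered by `n + 1` open sets, each of which is contractible in `X`. -/
def LSCatLE (X : Type) [TopologicalSpace X] (n : ℕ) : Prop :=
  ∃ U : Fin (n + 1) → Set X, (∀ i, IsOpen (U i)) ∧ (⋃ i, U i) = Set.univ ∧
    ∀ i, ∃ x0 : X, (inclCM (U i)).Homotopic (ContinuousMap.const _ x0)

/-- `f : X → Y` is an `S`-localization (with coefficients `R`): `Y` is `S`-local and `f`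
induces an isomorphism on homology with coefficients in `R`. -/
def IsLocalizationOver (R : Type) [CommRing R] (S : ℕ → Prop) {X Y : Type}
    [TopologicalSpace X] [TopologicalSpace Y] (f : C(X, Y)) : Prop :=
  SLocalSpace S Y ∧ ∀ n : ℕ, Function.Bijective (SHmap R n f)

/-! ### The induced homomorphism on fundamental groups, and the plus construction -/

/-- The homomorphism induced by a continuous map on fundamental groups. -/
def pi1Hom {X Y : Type} [TopologicalSpace X] [TopologicalSpace Y] (f : C(X, Y)) (x : X) :
    FundamentalGroup X x →* FundamentalGroup Y (f x) :=
  CategoryTheory.Functor.mapEnd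
    (X := FundamentalGroupoid.mk x)
    (FundamentalGroupoid.fundamentalGroupoidFunctor.map
      (show TopCat.of X ⟶ TopCat.of Y from TopCat.ofHom f))

/-- `l : X → Y` is a Quillen plus construction with respect to the perfect normal subgroup
`P ≤ π₁(X, x)`: it kills exactly `P` on fundamental groups and its homotopy fibre is acyclic
(equivalently, it is a homology isomorphism for all local coefficient systems on `Y`). -/
def IsPlusConstructionWrt {X Y : Type} [TopologicalSpace X] [TopologicalSpace Y]
    (l : C(X, Y)) (x : X) (P : Subgroup (FundamentalGroup X x)) : Prop :=
  P.Normal ∧ ⁅P, P⁆ = P ∧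
  Function.Surjective (pi1Hom l x) ∧ (pi1Hom l x).ker = P ∧
  AcyclicSpace (HFiber l (l x))

/-! ### Graph products of groups -/

/-- The commutation relations defining a graph product. -/
def graphProdRels {m : ℕ} (Γ : SimpleGraph (Fin m)) (G : Fin m → Type)
    [∀ i, Group (G i)] : Set (Monoid.CoprodI G) :=
  {x | ∃ (i j : Fin m) (g : G i) (h : G j), Γ.Adj i j ∧
    x = Monoid.CoprodI.of g * Monoid.CoprodI.of h *
      (Monoid.CoprodI.of g)⁻¹ * (Monoid.CoprodI.of h)⁻¹}

/-- The graph product of the groups `G i` over the simple graph `Γ`. -/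
def GraphProduct {m : ℕ} (Γ : SimpleGraph (Fin m)) (G : Fin m → Type)
    [∀ i, Group (G i)] : Type :=
  Monoid.CoprodI G ⧸ Subgroup.normalClosure (graphProdRels Γ G)

instance {m : ℕ} (Γ : SimpleGraph (Fin m)) (G : Fin m → Type) [∀ i, Group (G i)] :
    Group (GraphProduct Γ G) :=
  inferInstanceAs (Group (Monoid.CoprodI G ⧸ Subgroup.normalClosure (graphProdRels Γ G)))

theorem graphProdRels_le_ker {m : ℕ} (Γ : SimpleGraph (Fin m)) (G : Fin m → Type)
    [∀ i, Group (G i)] :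
    Subgroup.normalClosure (graphProdRels Γ G) ≤
      (Monoid.CoprodI.lift fun i => MonoidHom.mulSingle G i).ker := by
  apply Subgroup.normalClosure_le_normal
  rintro x ⟨i, j, g, h, hadj, rfl⟩
  have hc : Commute (MonoidHom.mulSingle G i g) (MonoidHom.mulSingle G j h) :=
    Pi.mulSingle_commute hadj.ne g h
  simp only [SetLike.mem_coe, MonoidHom.mem_ker, map_mul, map_inv, Monoid.CoprodI.lift_of]
  rw [hc.eq]
  group

/-- The canonical homomorphism from the graph product to the direct product. -/
def GraphProduct.toPi {m : ℕ} (Γ : SimpleGraph (Fin m)) (G : Fin m → Type)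
    [∀ i, Group (G i)] : GraphProduct Γ G →* ∀ i, G i :=
  QuotientGroup.lift _ (Monoid.CoprodI.lift fun i => MonoidHom.mulSingle G i)
    (graphProdRels_le_ker Γ G)

/-- The graph product kernel `K_Γ(G)`: the kernel of the canonical homomorphism
`G^Γ → ∏ i, G i`. -/
def GraphProductKernel {m : ℕ} (Γ : SimpleGraph (Fin m)) (G : Fin m → Type)
    [∀ i, Group (G i)] : Subgroup (GraphProduct Γ G) :=
  (GraphProduct.toPi Γ G).ker

/-- The flag complex of a simple graph. -/
def flagComplex {m : ℕ} (Γ : SimpleGraph (Fin m)) : SimplicialComplexOn m where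
  faces := {σ | ∀ i ∈ σ, ∀ j ∈ σ, i ≠ j → Γ.Adj i j}
  empty_mem := by simp
  down_closed := fun hσ hτ i hi j hj hij => hσ i (hτ hi) j (hτ hj) hij
  vertex_mem := by
    intro i j hj k hk hjk
    simp only [Finset.mem_singleton] at hj hk
    exact absurd (hj.trans hk.symm) hjk


/-- A rational sphere `S^n_{(0)}` (`n ≥ 2`): a simply connected rational space whose reduced
integral homology is a single `ℚ` in degree `n`. -/
def IsRationalSphere (Y : Type) [TopologicalSpace Y] (n : ℕ) : Prop :=
  SimplyConnectedSpace Y ∧ SLocalSpace ratInv Y ∧ 2 ≤ n ∧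
    Nonempty ((SH ℤ n Y) ≃+ ℚ) ∧ ∀ k : ℕ, 1 ≤ k → k ≠ n → Subsingleton (SH ℤ k Y)

end

section HomotopyGroups

variable {A B : Type} [TopologicalSpace A] [TopologicalSpace B]

theorem piMap_mul {X Y : Type} [TopologicalSpace X] [TopologicalSpace Y] (f : C(X, Y))
    {n : ℕ} {x : X} (g h : HomotopyGroup (Fin (n + 1)) X x) :
    piMap f (Fin (n + 1)) x (g * h) = piMap f (Fin (n + 1)) x g * piMap f (Fin (n + 1)) x h := by
  induction g, h using Quotient.inductionOn₂ with
  | h p q =>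
    refine (congrArg (piMap f _ x) (HomotopyGroup.mul_spec (i := 0))).trans
      (Eq.trans ?_ (HomotopyGroup.mul_spec (i := 0)).symm)
    refine congrArg (Quotient.mk _) (Subtype.ext (ContinuousMap.ext fun t => ?_))
    show f (GenLoop.transAt 0 q p t) = GenLoop.transAt 0 (GenLoop.push f q) (GenLoop.push f p) t
    simp only [GenLoop.transAt, GenLoop.coe_copy, apply_ite f]
    split_ifs <;> rfl

def GenLoop.prodMk {N : Type} {a : A} {b : B} (p : GenLoop N A a) (q : GenLoop N B b) :
    GenLoop N (A × B) (a, b) :=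
  ⟨p.1.prodMk q.1, fun t ht => Prod.ext (p.2 t ht) (q.2 t ht)⟩

theorem GenLoop.Homotopic.prodMk {N : Type} {a : A} {b : B} {p p' : GenLoop N A a}
    {q q' : GenLoop N B b} (hp : GenLoop.Homotopic p p') (hq : GenLoop.Homotopic q q') :
    GenLoop.Homotopic (GenLoop.prodMk p q) (GenLoop.prodMk p' q') :=
  hp.map2 ContinuousMap.HomotopyRel.prod hq

def HomotopyGroup.prodEquiv {N : Type} {a : A} {b : B} :
    HomotopyGroup N (A × B) (a, b) ≃ HomotopyGroup N A a × HomotopyGroup N B b where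
  toFun g := (piMap .fst N (a, b) g, piMap .snd N (a, b) g)
  invFun g :=
    Quotient.map₂ GenLoop.prodMk (fun _ _ hp _ _ hq => GenLoop.Homotopic.prodMk hp hq) g.1 g.2
  left_inv g := by
    induction g using Quotient.inductionOn with
    | h p => rfl
  right_inv g := by
    obtain ⟨g, h⟩ := g
    induction g, h using Quotient.inductionOn₂ with
    | h p q => rfl

theorem HomotopyGroup.prodEquiv_piMap_prodMap {A' B' : Type} [TopologicalSpace A']
    [TopologicalSpace B'] (f : C(A, A')) (g : C(B, B')) {N : Type} (x : A × B)
    (z : HomotopyGroup N (A × B) x) :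
    prodEquiv (piMap (f.prodMap g) N x z) =
      Prod.map (piMap f N x.1) (piMap g N x.2) (prodEquiv z) := by
  induction z using Quotient.inductionOn with
  | h p => rfl

def HomotopyGroup.prodMulEquiv {n : ℕ} {a : A} {b : B} :
    HomotopyGroup (Fin (n + 1)) (A × B) (a, b) ≃*
      HomotopyGroup (Fin (n + 1)) A a × HomotopyGroup (Fin (n + 1)) B b :=
  { prodEquiv with map_mul' := fun g h => Prod.ext (piMap_mul _ g h) (piMap_mul _ g h) }

instance HomotopyGroup.subsingleton_prod {N : Type} {a : A} {b : B}
    [Subsingleton (HomotopyGroup N A a)] [Subsingleton (HomotopyGroup N B b)] :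
    Subsingleton (HomotopyGroup N (A × B) (a, b)) :=
  prodEquiv.subsingleton

instance HomotopyGroup.subsingleton_of_subsingleton {N X : Type} [TopologicalSpace X]
    [Subsingleton X] (x : X) : Subsingleton (HomotopyGroup N X x) :=
  ⟨fun u v => Quotient.inductionOn₂ u v fun _ _ =>
    congrArg (Quotient.mk _) (Subtype.ext (ContinuousMap.ext fun _ => Subsingleton.elim _ _))⟩

end HomotopyGroups

section Products

variable {A B A' B' : Type} [TopologicalSpace A] [TopologicalSpace B] [TopologicalSpace A']
  [TopologicalSpace B']

theorem WeaklyContractible.prod (hA : WeaklyContractible A) (hB : WeaklyContractible B) :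
    WeaklyContractible (A × B) :=
  ⟨⟨(hA.1.some, hB.1.some)⟩, fun x n =>
    have := hA.2 x.1 n; have := hB.2 x.2 n; HomotopyGroup.subsingleton_prod⟩

theorem IsWeakHomotopyEquiv.prodMap {f : C(A, A')} {g : C(B, B')} (hf : IsWeakHomotopyEquiv f)
    (hg : IsWeakHomotopyEquiv g) : IsWeakHomotopyEquiv (f.prodMap g) := by
  refine ⟨fun ⟨a', b'⟩ => ?_, fun x n => ?_⟩
  · obtain ⟨a⟩ := hf.1 ⟨a'⟩
    obtain ⟨b⟩ := hg.1 ⟨b'⟩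
    exact ⟨(a, b)⟩
  · have h : piMap (f.prodMap g) (Fin n) x =
        HomotopyGroup.prodEquiv.symm ∘ Prod.map (piMap f (Fin n) x.1) (piMap g (Fin n) x.2) ∘
          HomotopyGroup.prodEquiv := by
      funext z
      exact (Equiv.eq_symm_apply _).mpr (HomotopyGroup.prodEquiv_piMap_prodMap f g x z)
    rw [h]
    exact HomotopyGroup.prodEquiv.symm.bijective.comp
      (((hf.2 x.1 n).prodMap (hg.2 x.2 n)).comp HomotopyGroup.prodEquiv.bijective)

theorem bijective_pow_of_mulEquiv {G H : Type} [Group G] [Group H] (e : G ≃* H) (k : ℕ)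
    (h : Function.Bijective (fun g : H => g ^ k)) : Function.Bijective (fun g : G => g ^ k) := by
  have : (fun g : G => g ^ k) = e.symm ∘ (fun g : H => g ^ k) ∘ e := by
    funext g
    simp
  rw [this]
  exact e.symm.bijective.comp (h.comp e.bijective)

theorem SLocalSpace.prod {S : ℕ → Prop} (hA : SLocalSpace S A) (hB : SLocalSpace S B) :
    SLocalSpace S (A × B) := fun x n k hk =>
  bijective_pow_of_mulEquiv HomotopyGroup.prodMulEquiv k
    ((hA x.1 n k hk).prodMap (hB x.2 n k hk))

theorem IsFGMulOver.of_mulEquiv {R : Type} [CommRing R] {G H : Type} [Group G] [Group H]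
    (e : G ≃* H) (h : IsFGMulOver R H) : IsFGMulOver R G :=
  let ⟨N, i, m, fin, ⟨e'⟩⟩ := h
  ⟨N, i, m, fin, ⟨e.trans e'⟩⟩

theorem IsFGMulOver.prod {R : Type} [CommRing R] {G H : Type} [Group G] [Group H]
    (hG : IsFGMulOver R G) (hH : IsFGMulOver R H) : IsFGMulOver R (G × H) := by
  obtain ⟨N₁, _, _, _, ⟨e₁⟩⟩ := hG
  obtain ⟨N₂, _, _, _, ⟨e₂⟩⟩ := hH
  exact ⟨N₁ × N₂, inferInstance, inferInstance, inferInstance,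
    ⟨(e₁.prodCongr e₂).trans (MulEquiv.prodMultiplicative _ _).symm⟩⟩

theorem PiFiniteOver.prod {R : Type} [CommRing R] (hA : PiFiniteOver R A)
    (hB : PiFiniteOver R B) : PiFiniteOver R (A × B) := fun x n =>
  (hA x.1 n).prod (hB x.2 n) |>.of_mulEquiv HomotopyGroup.prodMulEquiv

theorem IsGEM.prod (hA : IsGEM A) (hB : IsGEM B) : IsGEM (A × B) := by
  obtain ⟨ι, Y, tY, n, hY, ⟨e⟩⟩ := hA
  obtain ⟨ι', Y', tY', n', hY', ⟨e'⟩⟩ := hB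
  let : ∀ s, TopologicalSpace (Sum.elim Y Y' s) := fun s => Sum.rec tY tY' s
  refine ⟨ι ⊕ ι', Sum.elim Y Y', inferInstance, Sum.elim n n', fun s => Sum.rec hY hY' s, ?_⟩
  exact ⟨(e.prodCongr e').trans
    (Homeomorph.sumPiEquivProdPi ι ι' (Sum.elim Y Y')).symm.toHomotopyEquiv⟩

theorem HomotopyRetract.prod (hA : HomotopyRetract A A') (hB : HomotopyRetract B B') :
    HomotopyRetract (A × B) (A' × B') := by
  obtain ⟨i, r, hA⟩ := hA
  obtain ⟨i', r', hB⟩ := hB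
  exact ⟨i.prodMap i', r.prodMap r', hA.prodMap hB⟩

end Products

section HomotopyFibration

variable {E₁ B₁ E₂ B₂ : Type} [TopologicalSpace E₁] [TopologicalSpace B₁]
  [TopologicalSpace E₂] [TopologicalSpace B₂]

theorem isHEquivMap_iff {X Y : Type} [TopologicalSpace X] [TopologicalSpace Y] (f : C(X, Y)) :
    IsHEquivMap f ↔ ∃ e : X ≃ₕ Y, e.toFun = f :=
  ⟨fun ⟨g, hgf, hfg⟩ => ⟨⟨f, g, hgf, hfg⟩, rfl⟩,
    fun ⟨e, he⟩ => he ▸ ⟨e.invFun, e.left_inv, e.right_inv⟩⟩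

def HFiber.prodHomeomorph (p₁ : C(E₁, B₁)) (p₂ : C(E₂, B₂)) (b₁ : B₁) (b₂ : B₂) :
    HFiber (p₁.prodMap p₂) (b₁, b₂) ≃ₜ HFiber p₁ b₁ × HFiber p₂ b₂ where
  toFun w := (⟨(w.1.1.1, ContinuousMap.fst.comp w.1.2),
      congrArg Prod.fst w.2.1, congrArg Prod.fst w.2.2⟩,
    ⟨(w.1.1.2, ContinuousMap.snd.comp w.1.2),
      congrArg Prod.snd w.2.1, congrArg Prod.snd w.2.2⟩)
  invFun z := ⟨((z.1.1.1, z.2.1.1), z.1.1.2.prodMk z.2.1.2),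
    Prod.ext z.1.2.1 z.2.2.1, Prod.ext z.1.2.2 z.2.2.2⟩
  left_inv _ := rfl
  right_inv _ := rfl
  continuous_toFun := by fun_prop
  continuous_invFun := by
    refine .subtype_mk (.prodMk (by fun_prop) (continuous_of_continuous_uncurry _ ?_)) _
    simp only [Function.uncurry_def, ContinuousMap.prod_eval]
    fun_prop

theorem IsHomotopyFibration.prodMap {F₁ F₂ : Type} [TopologicalSpace F₁] [TopologicalSpace F₂]
    {i₁ : C(F₁, E₁)} {p₁ : C(E₁, B₁)} {i₂ : C(F₂, E₂)} {p₂ : C(E₂, B₂)}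
    (h₁ : IsHomotopyFibration i₁ p₁) (h₂ : IsHomotopyFibration i₂ p₂) :
    IsHomotopyFibration (i₁.prodMap i₂) (p₁.prodMap p₂) := by
  obtain ⟨b₁, H₁, hH₁⟩ := h₁
  obtain ⟨b₂, H₂, hH₂⟩ := h₂
  obtain ⟨e₁, he₁⟩ := (isHEquivMap_iff _).mp hH₁
  obtain ⟨e₂, he₂⟩ := (isHEquivMap_iff _).mp hH₂
  refine ⟨(b₁, b₂), H₁.prodMap H₂, (isHEquivMap_iff _).mpr
    ⟨(e₁.prodCongr e₂).trans (HFiber.prodHomeomorph p₁ p₂ b₁ b₂).symm.toHomotopyEquiv, ?_⟩⟩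
  show ((HFiber.prodHomeomorph p₁ p₂ b₁ b₂).symm : C(_, HFiber (p₁.prodMap p₂) (b₁, b₂))).comp
      (e₁.toFun.prodMap e₂.toFun) = _
  rw [he₁, he₂]
  rfl

end HomotopyFibration

section Towers

theorem IsFGMulOver.of_subsingleton (R : Type) [CommRing R] {G : Type} [Group G]
    [Subsingleton G] : IsFGMulOver R G :=
  letI := uniqueOfSubsingleton (1 : G)
  ⟨PUnit, inferInstance, inferInstance, inferInstance, ⟨MulEquiv.ofUnique⟩⟩

theorem isGEM_punit : IsGEM PUnit :=
  ⟨Empty, fun _ => PUnit, fun _ => inferInstance, fun _ => 0, fun i => i.elim,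
    ⟨(Homeomorph.homeomorphOfUnique _ _).toHomotopyEquiv⟩⟩

theorem isHomotopyFibration_id_const (Z : Type) [TopologicalSpace Z] :
    IsHomotopyFibration (ContinuousMap.id Z) (ContinuousMap.const Z PUnit.unit) := by
  refine ⟨PUnit.unit, .refl _, HFiber.proj _ _, .refl _, ?_⟩
  convert ContinuousMap.Homotopic.refl
    (ContinuousMap.id (HFiber (.const Z PUnit.unit) PUnit.unit))
  exact ContinuousMap.ext fun w => Subtype.ext (Prod.ext rfl (Subsingleton.elim _ _))

variable {R : Type} [CommRing R] {S : ℕ → Prop} {ft : Bool} {c : ℕ}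

theorem GPTStep.id (Z : Type) [TopologicalSpace Z] : GPTStep R S ft c (ContinuousMap.id Z) :=
  ⟨PUnit, inferInstance, .const Z PUnit.unit, isGEM_punit, fun _ _ _ => inferInstance,
    fun _ _ _ _ => Function.bijective_of_subsingleton _, fun _ _ _ => .of_subsingleton R,
    isHomotopyFibration_id_const Z⟩

theorem GPTStep.prodMap {Z₁' Z₁ Z₂' Z₂ : Type} [TopologicalSpace Z₁'] [TopologicalSpace Z₁]
    [TopologicalSpace Z₂'] [TopologicalSpace Z₂] {q₁ : C(Z₁', Z₁)} {q₂ : C(Z₂', Z₂)}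
    (h₁ : GPTStep R S ft c q₁) (h₂ : GPTStep R S ft c q₂) :
    GPTStep R S ft c (q₁.prodMap q₂) := by
  obtain ⟨K₁, _, k₁, hK₁, hc₁, hS₁, hR₁, hq₁⟩ := h₁
  obtain ⟨K₂, _, k₂, hK₂, hc₂, hS₂, hR₂, hq₂⟩ := h₂
  exact ⟨K₁ × K₂, inferInstance, k₁.prodMap k₂, hK₁.prod hK₂,
    fun y j hj => have := hc₁ y.1 j hj; have := hc₂ y.2 j hj; HomotopyGroup.subsingleton_prod,
    hS₁.prod hS₂, fun hft => (hR₁ hft).prod (hR₂ hft), hq₁.prodMap hq₂⟩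

variable {X Y : Type} [TopologicalSpace X] [TopologicalSpace Y]

theorem HasGPT.prod {l : ℕ} (hX : HasGPT R S ft c X l) (hY : HasGPT R S ft c Y l) :
    HasGPT R S ft c (X × Y) l := by
  obtain ⟨Z₁, _, q₁, hZ₁, hq₁, f₁, hf₁⟩ := hX
  obtain ⟨Z₂, _, q₂, hZ₂, hq₂, f₂, hf₂⟩ := hY
  exact ⟨fun n => Z₁ n × Z₂ n, fun n => inferInstance, fun n => (q₁ n).prodMap (q₂ n),
    hZ₁.prod hZ₂, fun n hn => (hq₁ n hn).prodMap (hq₂ n hn), f₁.prodMap f₂, hf₁.prodMap hf₂⟩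

theorem HasGPT.succ {l : ℕ} (h : HasGPT R S ft c X l) : HasGPT R S ft c X (l + 1) := by
  obtain ⟨Z, tZ, q, hZ, hq, f, hf⟩ := h
  -- shift the tower up by one and put the identity of `Z 0` at the bottom
  let Z' : ℕ → Type := fun n => match n with
    | 0 => Z 0
    | n + 1 => Z n
  let tZ' : ∀ n, TopologicalSpace (Z' n) := fun n => match n with
    | 0 => tZ 0
    | n + 1 => tZ n
  let q' : ∀ n, C(Z' (n + 1), Z' n) := fun n => match n with
    | 0 => ContinuousMap.id (Z 0)
    | n + 1 => q n
  refine ⟨Z', tZ', q', hZ, ?_, f, hf⟩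
  rintro (_ | n) hn
  · exact GPTStep.id _
  · exact hq n (by omega)

theorem HasGPT.mono {l l' : ℕ} (h : HasGPT R S ft c X l) (hl : l ≤ l') :
    HasGPT R S ft c X l' := by
  induction l', hl using Nat.le_induction with
  | base => exact h
  | succ _ _ ih => exact ih.succ

end Towers

section UniversalCover

variable {E₁ X₁ E₂ X₂ : Type} [TopologicalSpace E₁] [TopologicalSpace X₁]
  [TopologicalSpace E₂] [TopologicalSpace X₂]

theorem IsEvenlyCovered.prodMap {I J : Type} [TopologicalSpace I] [TopologicalSpace J]
    {f : E₁ → X₁} {g : E₂ → X₂} {x₁ : X₁} {x₂ : X₂} (hf : IsEvenlyCovered f x₁ I)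
    (hg : IsEvenlyCovered g x₂ J) : IsEvenlyCovered (Prod.map f g) (x₁, x₂) (I × J) := by
  obtain ⟨_, U₁, hx₁, hU₁, hfU₁, H₁, hH₁⟩ := hf
  obtain ⟨_, U₂, hx₂, hU₂, hgU₂, H₂, hH₂⟩ := hg
  refine ⟨inferInstance, U₁ ×ˢ U₂, ⟨hx₁, hx₂⟩, hU₁.prod hU₂, hfU₁.prod hgU₂,
    ((Homeomorph.Set.prod _ _).trans (H₁.prodCongr H₂)).trans
      ((Homeomorph.prodProdProdComm _ _ _ _).trans
        ((Homeomorph.Set.prod U₁ U₂).symm.prodCongr (.refl _))),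
    fun w => Prod.ext (hH₁ _) (hH₂ _)⟩

theorem IsCoveringMap.prodMap {f : E₁ → X₁} {g : E₂ → X₂} (hf : IsCoveringMap f)
    (hg : IsCoveringMap g) : IsCoveringMap (Prod.map f g) := fun x =>
  ((hf x.1).prodMap (hg x.2)).to_isEvenlyCovered_preimage

instance SimplyConnectedSpace.prod [SimplyConnectedSpace E₁] [SimplyConnectedSpace E₂] :
    SimplyConnectedSpace (E₁ × E₂) := by
  refine simply_connected_iff_paths_homotopic'.mpr ⟨inferInstance, fun p q => ?_⟩
  obtain ⟨H₁⟩ := SimplyConnectedSpace.paths_homotopic (p.map continuous_fst) (q.map continuous_fst)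
  obtain ⟨H₂⟩ := SimplyConnectedSpace.paths_homotopic (p.map continuous_snd) (q.map continuous_snd)
  exact ⟨Path.Homotopic.prodHomotopy H₁ H₂⟩

theorem IsUniversalCover.prodMap {c₁ : C(E₁, X₁)} {c₂ : C(E₂, X₂)} (h₁ : IsUniversalCover c₁)
    (h₂ : IsUniversalCover c₂) : IsUniversalCover (c₁.prodMap c₂) :=
  have := h₁.2; have := h₂.2; ⟨h₁.1.prodMap h₂.1, inferInstance⟩

end UniversalCover

/-- Lemma 2.2 of the paper: the class `𝐏` is closed under finite products. -/
theorem classP_prod (X Y : Type) [TopologicalSpace X] [TopologicalSpace Y]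
    (hX : ClassP X) (hY : ClassP Y) : ClassP (X × Y) := by
  obtain ⟨_, -, X₁, _, _, -, ⟨X₁', _, c₁, hc₁, l₁, hX₁'⟩, hXX₁⟩ := hX
  obtain ⟨_, -, Y₁, _, _, -, ⟨Y₁', _, c₂, hc₂, l₂, hY₁'⟩, hYY₁⟩ := hY
  refine ⟨inferInstance, nofun, X₁ × Y₁, inferInstance, inferInstance, nofun,
    ⟨X₁' × Y₁', inferInstance, c₁.prodMap c₂, hc₁.prodMap hc₂, max l₁ l₂, ?_⟩, hXX₁.prod hYY₁⟩
  exact (hX₁'.mono (le_max_left l₁ l₂)).prod (hY₁'.mono (le_max_right l₁ l₂))
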